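/- Consider a strategic response a_i → a'_i of voter i (i moves to her most preferred candidate among those that locally dominate her current vote) where the current vote a_i is not a possible winner for i. Then a'_i is voter i's most preferred candidate among the set of possible winners W_i(⃗a, r). -/
import Mathlib


open Finset

/-- The Plurality winner of a score vector: highest score, ties broken
lexicographically (smallest index wins). -/
noncomputable def winner {m : ℕ} [NeZero m] (s : Fin m → ℕ) : Fin m :=
  (Finset.univ.filter fun c => ∀ d, s d ≤ s c).min'
    (by
      obtain ⟨c, hc⟩ := Finite.exists_max s
      exact ⟨c, Finset.mem_filter.mpr ⟨Finset.mem_univ c, hc⟩⟩)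

/-- Add one vote for candidate `x` to score vector `s`. -/
def addVote {m : ℕ} (s : Fin m → ℕ) (x : Fin m) : Fin m → ℕ :=
  fun c => s c + if c = x then 1 else 0

/-- The winner after one additional vote for `x` is added to `s`. -/
noncomputable def outcome {m : ℕ} [NeZero m] (s : Fin m → ℕ) (x : Fin m) : Fin m :=
  winner (addVote s x)

/-- Action `b` S-beats action `c` (w.r.t. strict preference `pref`). -/
def Beats {m : ℕ} [NeZero m] (S : Set (Fin m → ℕ)) (pref : Fin m → Fin m → Prop)
    (b c : Fin m) : Prop :=
  ∃ s ∈ S, pref (outcome s b) (outcome s c)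

/-- Action `b` S-dominates action `c`. -/
def Dominates {m : ℕ} [NeZero m] (S : Set (Fin m → ℕ)) (pref : Fin m → Fin m → Prop)
    (b c : Fin m) : Prop :=
  Beats S pref b c ∧ ¬ Beats S pref c b

/-- ℓ1 distance between score vectors. -/
def l1 {m : ℕ} (s s' : Fin m → ℕ) : ℕ := ∑ c, Nat.dist (s c) (s' c)

/-- Scores of the profile `a` excluding voter `i`'s vote. -/
def scoreExc {m n : ℕ} (a : Fin n → Fin m) (i : Fin n) : Fin m → ℕ :=
  fun c => (Finset.univ.filter fun j => j ≠ i ∧ a j = c).card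

/-- Scores of the full profile `a`. -/
def scoreOf {m n : ℕ} (a : Fin n → Fin m) : Fin m → ℕ :=
  fun c => (Finset.univ.filter fun j => a j = c).card

/-- The accessible set `S_i(a, r)`: ℓ1 ball of radius `r` around the scores of the others. -/
def ball {m n : ℕ} (a : Fin n → Fin m) (i : Fin n) (r : ℕ) : Set (Fin m → ℕ) :=
  {s' | l1 s' (scoreExc a i) ≤ r}

/-- Possible winners for voter `i` at state `a` with uncertainty `r`. -/
noncomputable def PossW {m n : ℕ} [NeZero m] (a : Fin n → Fin m) (i : Fin n) (r : ℕ) :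
    Set (Fin m) :=
  {c | ∃ s' ∈ ball a i r, outcome s' c = c}

/-- `H̄_w(s)`: candidates within `w` votes of the winner's score. -/
noncomputable def Hbar {m : ℕ} [NeZero m] (w : ℕ) (s : Fin m → ℕ) : Set (Fin m) :=
  {c | s (winner s) ≤ s c + w}


section Helpers

variable {m : ℕ} [NeZero m]

lemma winner_mem (s : Fin m → ℕ) :
    winner s ∈ Finset.univ.filter (fun c => ∀ d, s d ≤ s c) := by
  unfold winner; exact Finset.min'_mem _ _

lemma winner_isMax (s : Fin m → ℕ) (d : Fin m) : s d ≤ s (winner s) := by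
  have h := winner_mem s
  rw [Finset.mem_filter] at h
  exact h.2 d

lemma winner_min (s : Fin m → ℕ) (c : Fin m) (hc : ∀ d, s d ≤ s c) : winner s ≤ c := by
  unfold winner
  exact Finset.min'_le _ c (Finset.mem_filter.mpr ⟨Finset.mem_univ c, hc⟩)

lemma winner_eq (s : Fin m → ℕ) (w : Fin m) (hmax : ∀ d, s d ≤ s w)
    (htie : ∀ d, s w ≤ s d → w ≤ d) : winner s = w :=
  le_antisymm (winner_min s w hmax) (htie _ (winner_isMax s w))

lemma winner_tie (s : Fin m → ℕ) (d : Fin m) (hd : s (winner s) ≤ s d) :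
    winner s ≤ d :=
  winner_min s d (fun e => le_trans (winner_isMax s e) hd)

lemma outcome_winner (s : Fin m → ℕ) : outcome s (winner s) = winner s := by
  unfold outcome
  apply winner_eq
  · intro d
    have hmax := winner_isMax s d
    by_cases h : d = winner s <;> simp [addVote, h]
    omega
  · intro d hd
    rcases eq_or_ne d (winner s) with rfl | h
    · exact le_refl _
    · have hmax := winner_isMax s d
      simp [addVote, h] at hd
      omega

lemma outcome_eq_or (s : Fin m → ℕ) (x : Fin m) :
    outcome s x = x ∨ outcome s x = winner s := by
  by_cases h : outcome s x = x
  · exact Or.inl h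
  · right
    have hmaxA : ∀ d, addVote s x d ≤ addVote s x (outcome s x) :=
      fun d => winner_isMax (addVote s x) d
    have hsv : addVote s x (outcome s x) = s (outcome s x) := by
      simp [addVote, h]
    have hmaxs : ∀ d, s d ≤ s (outcome s x) := by
      intro d
      have h1 := hmaxA d
      rw [hsv] at h1
      by_cases hd : d = x
      · subst hd
        simp [addVote] at h1
        omega
      · simpa [addVote, hd] using h1
    refine (winner_eq s (outcome s x) hmaxs ?_).symm
    intro d hd
    refine winner_min (addVote s x) d (fun e => ?_)
    calc addVote s x e ≤ addVote s x (outcome s x) := hmaxA e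
      _ = s (outcome s x) := hsv
      _ ≤ s d := hd
      _ ≤ addVote s x d := by simp [addVote]

lemma step_incr (s : Fin m → ℕ) (c : Fin m)
    (hne : winner (Function.update s c (s c + 1)) ≠ winner s) :
    outcome (Function.update s c (s c + 1)) (winner s) = winner s := by
  have hmax : ∀ d, s d ≤ s (winner s) := winner_isMax s
  have hval : ∀ d, Function.update s c (s c + 1) d = if d = c then s c + 1 else s d := by
    intro d
    by_cases hd : d = c
    · subst hd; simp
    · simp [hd]
  have hcw : c ≠ winner s := by
    intro h
    subst h
    apply hne
    apply winner_eq
    · intro d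
      rw [hval d, hval (winner s), if_pos rfl]
      have := hmax d
      split_ifs with hd <;> omega
    · intro d hd
      rw [hval d, hval (winner s), if_pos rfl] at hd
      split_ifs at hd with hdw
      · exact hdw.symm.le
      · exact absurd hd (by have := hmax d; omega)
  have haval : ∀ d, addVote (Function.update s c (s c + 1)) (winner s) d =
      (if d = c then s c + 1 else s d) + (if d = winner s then 1 else 0) := by
    intro d
    simp only [addVote]
    rw [hval d]
  unfold outcome
  apply winner_eq
  · intro d
    rw [haval d, haval (winner s), if_neg (Ne.symm hcw), if_pos rfl]
    have h1 := hmax d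
    have h2 := hmax c
    split_ifs <;> omega
  · intro d hd
    rw [haval d, haval (winner s), if_neg (Ne.symm hcw), if_pos rfl] at hd
    rcases eq_or_ne d (winner s) with rfl | hdw
    · exact le_refl _
    · rcases eq_or_ne d c with rfl | hdc
      · rw [if_pos rfl, if_neg hdw] at hd
        exact winner_tie s d (by have := hmax d; omega)
      · rw [if_neg hdc, if_neg hdw] at hd
        exact absurd hd (by have := hmax d; omega)

lemma step_decr (s : Fin m → ℕ) (c : Fin m) (hc : 1 ≤ s c)
    (hne : winner (Function.update s c (s c - 1)) ≠ winner s) :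
    outcome (Function.update s c (s c - 1)) (winner s) = winner s := by
  have hmax : ∀ d, s d ≤ s (winner s) := winner_isMax s
  have hval : ∀ d, Function.update s c (s c - 1) d = if d = c then s c - 1 else s d := by
    intro d
    by_cases hd : d = c
    · subst hd; simp
    · simp [hd]
  have hcw : c = winner s := by
    by_contra h
    apply hne
    apply winner_eq
    · intro d
      rw [hval d, hval (winner s), if_neg (Ne.symm h)]
      have h1 := hmax d
      have h2 := hmax c
      split_ifs with hd <;> omega
    · intro d hd
      rw [hval d, hval (winner s), if_neg (Ne.symm h)] at hd
      split_ifs at hd with hdc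
      · exact absurd hd (by have := hmax c; omega)
      · exact winner_tie s d hd
  subst hcw
  have haval : ∀ d, addVote (Function.update s (winner s) (s (winner s) - 1)) (winner s) d =
      (if d = winner s then s (winner s) - 1 else s d) + (if d = winner s then 1 else 0) := by
    intro d
    simp only [addVote]
    rw [hval d]
  unfold outcome
  apply winner_eq
  · intro d
    rw [haval d, haval (winner s), if_pos rfl, if_pos rfl]
    have h1 := hmax d
    split_ifs <;> omega
  · intro d hd
    rw [haval d, haval (winner s), if_pos rfl, if_pos rfl] at hd
    rcases eq_or_ne d (winner s) with rfl | hdw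
    · exact le_refl _
    · rw [if_neg hdw, if_neg hdw] at hd
      exact winner_tie s d (by omega)

lemma l1_eq_zero {s t : Fin m → ℕ} (h : l1 s t = 0) : s = t := by
  funext c
  have h2 := Finset.sum_eq_zero_iff.mp h c (Finset.mem_univ c)
  simp only [Nat.dist] at h2
  omega

lemma walk (w : Fin m) : ∀ (k : ℕ) (s t : Fin m → ℕ), l1 s t ≤ k →
    winner s = w → winner t ≠ w →
    ∃ u, (∀ c, min (s c) (t c) ≤ u c ∧ u c ≤ max (s c) (t c)) ∧
      outcome u w = w ∧ winner u ≠ w := by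
  intro k
  induction k with
  | zero =>
    intro s t hst hs ht
    have : s = t := l1_eq_zero (Nat.le_zero.mp hst)
    exact absurd (this ▸ hs) ht
  | succ k ih =>
    intro s t hst hs ht
    have hsne : s ≠ t := fun h => ht (h ▸ hs)
    obtain ⟨c, hc⟩ := Function.ne_iff.mp hsne
    have hsplit : ∀ (f : Fin m → ℕ), l1 f t =
        Nat.dist (f c) (t c) + ∑ d ∈ Finset.univ.erase c, Nat.dist (f d) (t d) := by
      intro f
      rw [l1, ← Finset.add_sum_erase _ _ (Finset.mem_univ c)]
    rcases Nat.lt_or_ge (s c) (t c) with h | h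
    · set s' := Function.update s c (s c + 1) with hs'
      have hval : ∀ d, s' d = if d = c then s c + 1 else s d := by
        intro d
        by_cases hd : d = c
        · subst hd; simp [hs']
        · simp [hs', hd]
      have hrest : ∑ d ∈ Finset.univ.erase c, Nat.dist (s' d) (t d)
          = ∑ d ∈ Finset.univ.erase c, Nat.dist (s d) (t d) := by
        refine Finset.sum_congr rfl (fun d hd => ?_)
        rw [hval d, if_neg (Finset.ne_of_mem_erase hd)]
      have hl1 : l1 s' t ≤ k := by
        have h1 := hsplit s
        have h2 := hsplit s'
        rw [hval c, if_pos rfl] at h2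
        simp only [Nat.dist] at h1 h2 hrest
        omega
      by_cases hw : winner s' = w
      · obtain ⟨u, hu, h1, h2⟩ := ih s' t hl1 hw ht
        refine ⟨u, fun d => ?_, h1, h2⟩
        have hud := hu d
        rw [hval d] at hud
        rcases eq_or_ne d c with rfl | hd
        · rw [if_pos rfl] at hud
          omega
        · rwa [if_neg hd] at hud
      · refine ⟨s', fun d => ?_, ?_, hw⟩
        · rw [hval d]
          rcases eq_or_ne d c with rfl | hd
          · rw [if_pos rfl]
            omega
          · rw [if_neg hd]
            omega
        · rw [← hs]
          refine step_incr s c ?_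
          rw [hs]
          exact hw
    · have h' : t c < s c := lt_of_le_of_ne h (fun he => hc he.symm)
      set s' := Function.update s c (s c - 1) with hs'
      have hval : ∀ d, s' d = if d = c then s c - 1 else s d := by
        intro d
        by_cases hd : d = c
        · subst hd; simp [hs']
        · simp [hs', hd]
      have hrest : ∑ d ∈ Finset.univ.erase c, Nat.dist (s' d) (t d)
          = ∑ d ∈ Finset.univ.erase c, Nat.dist (s d) (t d) := by
        refine Finset.sum_congr rfl (fun d hd => ?_)
        rw [hval d, if_neg (Finset.ne_of_mem_erase hd)]
      have hl1 : l1 s' t ≤ k := by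
        have h1 := hsplit s
        have h2 := hsplit s'
        rw [hval c, if_pos rfl] at h2
        simp only [Nat.dist] at h1 h2 hrest
        omega
      by_cases hw : winner s' = w
      · obtain ⟨u, hu, h1, h2⟩ := ih s' t hl1 hw ht
        refine ⟨u, fun d => ?_, h1, h2⟩
        have hud := hu d
        rw [hval d] at hud
        rcases eq_or_ne d c with rfl | hd
        · rw [if_pos rfl] at hud
          omega
        · rwa [if_neg hd] at hud
      · refine ⟨s', fun d => ?_, ?_, hw⟩
        · rw [hval d]
          rcases eq_or_ne d c with rfl | hd
          · rw [if_pos rfl]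
            omega
          · rw [if_neg hd]
            omega
        · rw [← hs]
          refine step_decr s c (by omega) ?_
          rw [hs]
          exact hw

lemma l1_le_of_between {s t u : Fin m → ℕ}
    (h : ∀ c, min (s c) (t c) ≤ u c ∧ u c ≤ max (s c) (t c)) : l1 u t ≤ l1 s t := by
  refine Finset.sum_le_sum (fun c _ => ?_)
  have := h c
  simp only [Nat.dist] at *
  omega

lemma exists_pref_min {α : Type*} (pref : α → α → Prop) [IsStrictTotalOrder α pref] :
    ∀ (s : Finset α), s.Nonempty → ∃ x ∈ s, ∀ y ∈ s, y ≠ x → pref x y := by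
  classical
  intro s
  induction s using Finset.induction_on with
  | empty => rintro ⟨x, hx⟩; simp at hx
  | @insert a s ha ih =>
    intro _
    rcases s.eq_empty_or_nonempty with rfl | hne
    · refine ⟨a, Finset.mem_insert_self a _, ?_⟩
      intro y hy hyne
      simp at hy
      exact absurd hy hyne
    · obtain ⟨x, hx, hmin⟩ := ih hne
      rcases trichotomous_of pref a x with hax | hax | hax
      · refine ⟨a, Finset.mem_insert_self a _, ?_⟩
        intro y hy hyne
        rcases Finset.mem_insert.mp hy with rfl | hys
        · exact absurd rfl hyne
        · rcases eq_or_ne y x with rfl | hyx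
          · exact hax
          · exact trans_of pref hax (hmin y hys hyx)
      · refine ⟨x, Finset.mem_insert_of_mem hx, ?_⟩
        intro y hy hyne
        rcases Finset.mem_insert.mp hy with rfl | hys
        · exact absurd hax hyne
        · exact hmin y hys hyne
      · refine ⟨x, Finset.mem_insert_of_mem hx, ?_⟩
        intro y hy hyne
        rcases Finset.mem_insert.mp hy with rfl | hys
        · exact hax
        · exact hmin y hys hyne

end Helpers

/-- if voter `i`'s current vote is not a possible winner and she makes a
strategic response (most preferred among the locally dominating candidates), then she
votes for her most preferred possible winner. -/
theorem strategic_response_best_possible_winner {m n : ℕ} [NeZero m] (r : ℕ)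
    (a : Fin n → Fin m) (i : Fin n) (pref : Fin m → Fin m → Prop)
    [IsStrictTotalOrder (Fin m) pref] (a' : Fin m)
    (hnot : a i ∉ PossW a i r)
    (hdom : Dominates (ball a i r) pref a' (a i))
    (hbest : ∀ d, Dominates (ball a i r) pref d (a i) → d ≠ a' → pref a' d) :
    a' ∈ PossW a i r ∧ ∀ c ∈ PossW a i r, c ≠ a' → pref a' c := by
  classical
  have hshat : scoreExc a i ∈ ball a i r := by
    simp [ball, l1, Nat.dist_self]
  have key : ∀ s ∈ ball a i r, outcome s (a i) = winner s := by
    intro s hs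
    rcases outcome_eq_or s (a i) with h | h
    · exact absurd ⟨s, hs, h⟩ hnot
    · exact h
  have hwinPoss : ∀ s ∈ ball a i r, winner s ∈ PossW a i r :=
    fun s hs => ⟨s, hs, outcome_winner s⟩
  have hWne : (Finset.univ.filter (· ∈ PossW a i r)).Nonempty :=
    ⟨winner (scoreExc a i),
      Finset.mem_filter.mpr ⟨Finset.mem_univ _, hwinPoss _ hshat⟩⟩
  obtain ⟨wb, hwbmem, hwbmin⟩ := exists_pref_min pref _ hWne
  have hwbW : wb ∈ PossW a i r := (Finset.mem_filter.mp hwbmem).2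
  have hmaxW : ∀ c ∈ PossW a i r, c ≠ wb → pref wb c := fun c hc hne =>
    hwbmin c (Finset.mem_filter.mpr ⟨Finset.mem_univ c, hc⟩) hne
  have asym : ∀ x y : Fin m, pref x y → pref y x → False := fun x y h1 h2 =>
    irrefl_of pref x (trans_of pref h1 h2)
  obtain ⟨sd, hsd, hpd⟩ := hdom.1
  rw [key sd hsd] at hpd
  have hod : outcome sd a' = a' := by
    rcases outcome_eq_or sd a' with h | h
    · exact h
    · rw [h] at hpd; exact absurd hpd (irrefl_of pref _)
  rw [hod] at hpd
  have ha'W : a' ∈ PossW a i r := ⟨sd, hsd, hod⟩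
  have hwd : winner sd ≠ wb := by
    intro h
    rw [h] at hpd
    rcases eq_or_ne a' wb with rfl | hne
    · exact irrefl_of pref _ hpd
    · exact asym _ _ hpd (hmaxW a' ha'W hne)
  obtain ⟨s0, hs0, h0⟩ := hwbW
  have hU : ∃ u ∈ ball a i r, outcome u wb = wb ∧ winner u ≠ wb := by
    by_cases hw0 : winner s0 = wb
    · by_cases hws : winner (scoreExc a i) = wb
      · obtain ⟨u, hu, h1, h2⟩ :=
          walk wb (l1 (scoreExc a i) sd) (scoreExc a i) sd le_rfl hws hwd
        refine ⟨u, ?_, h1, h2⟩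
        have hle : l1 u (scoreExc a i) ≤ l1 sd (scoreExc a i) := by
          refine l1_le_of_between (fun c => ?_)
          have := hu c
          omega
        exact le_trans hle hsd
      · obtain ⟨u, hu, h1, h2⟩ :=
          walk wb (l1 s0 (scoreExc a i)) s0 (scoreExc a i) le_rfl hw0 hws
        refine ⟨u, ?_, h1, h2⟩
        exact le_trans (l1_le_of_between hu) hs0
    · exact ⟨s0, hs0, h0, hw0⟩
  obtain ⟨u, hu, hou, hwu⟩ := hU
  have hwbdom : Dominates (ball a i r) pref wb (a i) := by
    constructor
    · refine ⟨u, hu, ?_⟩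
      rw [key u hu, hou]
      exact hmaxW (winner u) (hwinPoss u hu) hwu
    · rintro ⟨s, hs, hp⟩
      rw [key s hs] at hp
      rcases outcome_eq_or s wb with h | h
      · rw [h] at hp
        rcases eq_or_ne (winner s) wb with he | hne
        · rw [he] at hp; exact irrefl_of pref _ hp
        · exact asym _ _ hp (hmaxW (winner s) (hwinPoss s hs) hne)
      · rw [h] at hp; exact irrefl_of pref _ hp
  have heq : wb = a' := by
    by_contra hne
    exact asym _ _ (hbest wb hwbdom hne) (hmaxW a' ha'W (fun h => hne h.symm))
  refine ⟨ha'W, fun c hc hne => ?_⟩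
  rw [← heq]
  exact hmaxW c hc (by rw [heq]; exact hne)
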